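/- arXiv:1908.04903 — 8 statements merged into one kernel-verified Lean document; each statement's English description precedes it below -/
import Mathlib

section
/- Let h : ℝⁿ → ℝ be continuously differentiable, let γ > 0 and ρ ∈ [0,1), and let u : ℝⁿ → ℝᵐ be a continuous feedback such that for all x ∈ ℝⁿ, L_f h(x) + L_g h(x)·u(x) + γ·sign(h(x))·|h(x)|^ρ ≥ 0. Then for every closed-loop trajectory x(·) with initial condition x₀ = x(0), setting T = |h(x₀)|^{1−ρ}/(γ(1−ρ)), one has h(x(t)) ≥ 0 for all t ≥ T; in particular the trajectory reaches the set Γ = {x ∈ ℝⁿ : h(x) ≥ 0} by time T and remains in Γ for all t ≥ T. -/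
/-!
Along a trajectory, `y t = h (x t)` satisfies `γ (-y)^ρ ≤ ẏ` wherever `y < 0`. Hence `(-y)^(1-ρ)`
decreases at rate at least `γ (1 - ρ)` while `y` stays negative, so `y` cannot stay negative on
all of `[0, T]`; and once `y ≥ 0`, it stays nonnegative because `ẏ > 0` at every negative value.
-/

open Set

noncomputable def sgn (z : ℝ) : ℝ := if 0 < z then 1 else if z < 0 then -1 else 0

section ScalarReachability

variable {y y' : ℝ → ℝ}

theorem nonneg_of_deriv_pos_of_neg {s : ℝ} (hy : ∀ t ≥ s, HasDerivAt y (y' t) t)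
    (hpos : ∀ t ≥ s, y t < 0 → 0 < y' t) (hs : 0 ≤ y s) : ∀ t ≥ s, 0 ≤ y t := by
  intro t hst
  refine le_of_forall_pos_le_add fun ε hε => ?_
  -- `-y` can never cross the level `ε > 0` upwards, since `-y' < 0` there.
  have hbarrier := image_le_of_deriv_right_lt_deriv_boundary (f := fun r => -y r)
    (f' := fun r => -y' r) (B := fun _ => ε) (B' := fun _ => 0)
    (fun r hr => (hy r hr.1).continuousAt.continuousWithinAt.neg)
    (fun r hr => (hy r hr.1).neg.hasDerivWithinAt) (by linarith)
    (fun _ => hasDerivAt_const _ _)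
    (fun r hr hyr => neg_neg_of_pos (hpos r hr.1 (by linarith)))
    (right_mem_Icc.2 hst)
  linarith

theorem rpow_neg_add_le_of_rpow_le_deriv {γ ρ a b : ℝ} (hρ : ρ < 1) (hab : a ≤ b)
    (hy : ∀ t ∈ Icc a b, HasDerivAt y (y' t) t) (hneg : ∀ t ∈ Icc a b, y t < 0)
    (hy' : ∀ t ∈ Icc a b, γ * (-y t) ^ ρ ≤ y' t) :
    (-y b) ^ (1 - ρ) + γ * (1 - ρ) * (b - a) ≤ (-y a) ^ (1 - ρ) := by
  have hV : ∀ t ∈ Icc a b, HasDerivAt (fun r => (-y r) ^ (1 - ρ))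
      (-y' t * (1 - ρ) * (-y t) ^ (1 - ρ - 1)) t := fun t ht =>
    (hy t ht).neg.rpow_const (Or.inl (neg_ne_zero.2 (hneg t ht).ne))
  have hV' : ∀ t ∈ interior (Icc a b), deriv (fun r => (-y r) ^ (1 - ρ)) t ≤ -(γ * (1 - ρ)) := by
    rw [interior_Icc]
    intro t ht
    have ht' := Ioo_subset_Icc_self ht
    have hpos : 0 < -y t := neg_pos.2 (hneg t ht')
    have hcancel : (-y t) ^ ρ * (-y t) ^ (1 - ρ - 1) = 1 := by
      rw [← Real.rpow_add hpos]; norm_num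
    have hγ : γ ≤ y' t * (-y t) ^ (1 - ρ - 1) := by
      calc γ = γ * (-y t) ^ ρ * (-y t) ^ (1 - ρ - 1) := by rw [mul_assoc, hcancel, mul_one]
        _ ≤ y' t * (-y t) ^ (1 - ρ - 1) := by gcongr; exact hy' t ht'
    rw [(hV t ht').deriv]
    nlinarith
  have := (convex_Icc a b).image_sub_le_mul_sub_of_deriv_le
    (fun t ht => (hV t ht).continuousAt.continuousWithinAt)
    (fun t ht => (hV t (interior_subset ht)).differentiableAt.differentiableWithinAt)
    hV' a (left_mem_Icc.2 hab) b (right_mem_Icc.2 hab) hab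
  linarith

theorem nonneg_of_rpow_le_deriv {γ ρ : ℝ} (hγ : 0 < γ) (hρ : ρ < 1)
    (hy : ∀ t ≥ 0, HasDerivAt y (y' t) t) (hy' : ∀ t ≥ 0, y t < 0 → γ * (-y t) ^ ρ ≤ y' t) :
    ∀ t ≥ |y 0| ^ (1 - ρ) / (γ * (1 - ρ)), 0 ≤ y t := by
  set T := |y 0| ^ (1 - ρ) / (γ * (1 - ρ))
  have hρ' : 0 < 1 - ρ := by linarith
  have hT : 0 ≤ T := by positivity
  obtain ⟨s, hs, hys⟩ : ∃ s ∈ Icc 0 T, 0 ≤ y s := by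
    by_contra! hneg
    have hdecay := rpow_neg_add_le_of_rpow_le_deriv hρ hT (fun t ht => hy t ht.1) hneg
      (fun t ht => hy' t ht.1 (hneg t ht))
    rw [← abs_of_neg (hneg 0 (left_mem_Icc.2 hT)), sub_zero,
      mul_div_cancel₀ _ (by positivity)] at hdecay
    have : 0 < (-y T) ^ (1 - ρ) := Real.rpow_pos_of_pos (neg_pos.2 (hneg T (right_mem_Icc.2 hT))) _
    linarith
  refine fun t ht => nonneg_of_deriv_pos_of_neg (fun r hr => hy r (hs.1.trans hr))
    (fun r hr hyr => ?_) hys t (hs.2.trans ht)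
  exact (mul_pos hγ (Real.rpow_pos_of_pos (neg_pos.2 hyr) ρ)).trans_le (hy' r (hs.1.trans hr) hyr)

end ScalarReachability

theorem fcbf_finite_time_reachability_general {n m : ℕ}
    (f : (Fin n → ℝ) → (Fin n → ℝ))
    (g : (Fin n → ℝ) → (Fin n → Fin m → ℝ))
    (h : (Fin n → ℝ) → ℝ) (hC1 : ContDiff ℝ 1 h)
    (γ ρ : ℝ) (hγ : 0 < γ) (hρ1 : ρ < 1)
    (u : (Fin n → ℝ) → (Fin m → ℝ))
    (hcbf : ∀ x : Fin n → ℝ,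
      fderiv ℝ h x (f x) + fderiv ℝ h x (fun i => ∑ j, g x i j * u x j)
        + γ * sgn (h x) * |h x| ^ ρ ≥ 0)
    (x : ℝ → (Fin n → ℝ))
    (hx : ∀ t ≥ (0:ℝ),
      HasDerivAt x (f (x t) + fun i => ∑ j, g (x t) i j * u (x t) j) t)
    (T : ℝ) (hT : T = |h (x 0)| ^ (1 - ρ) / (γ * (1 - ρ))) :
    ∀ t ≥ T, 0 ≤ h (x t) := by
  subst hT
  refine nonneg_of_rpow_le_deriv (y := fun t => h (x t)) hγ hρ1
    (fun t ht => (hC1.differentiable one_ne_zero).differentiableAt.hasFDerivAt.comp_hasDerivAt t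
      (hx t ht)) fun t _ hneg => ?_
  have hsgn : sgn (h (x t)) = -1 := by simp [sgn, hneg, hneg.not_gt]
  have := hcbf (x t)
  rw [hsgn, abs_of_neg hneg] at this
  rw [map_add]
  linarith

/-- Finite time convergence control barrier function (Proposition III.1 of Li et al.):
if `h` is continuously differentiable, `γ > 0`, `ρ ∈ [0,1)`, and the continuous feedback `u`
satisfies `L_f h(x) + L_g h(x)·u(x) + γ·sign(h(x))·|h(x)|^ρ ≥ 0` for all `x`, then every
closed-loop trajectory satisfies `h(x(t)) ≥ 0` for all `t ≥ T` with
`T = |h(x₀)|^{1-ρ}/(γ(1-ρ))`. -/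
theorem fcbf_finite_time_reachability {n m : ℕ}
    (f : (Fin n → ℝ) → (Fin n → ℝ))
    (g : (Fin n → ℝ) → (Fin n → Fin m → ℝ))
    (hf : LocallyLipschitz f) (hg : LocallyLipschitz g)
    (h : (Fin n → ℝ) → ℝ) (hC1 : ContDiff ℝ 1 h)
    (γ ρ : ℝ) (hγ : 0 < γ) (hρ0 : 0 ≤ ρ) (hρ1 : ρ < 1)
    (u : (Fin n → ℝ) → (Fin m → ℝ)) (hu : Continuous u)
    (hcbf : ∀ x : Fin n → ℝ,
      fderiv ℝ h x (f x) + fderiv ℝ h x (fun i => ∑ j, g x i j * u x j)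
        + γ * sgn (h x) * |h x| ^ ρ ≥ 0)
    (x : ℝ → (Fin n → ℝ))
    (hx : ∀ t ≥ (0:ℝ),
      HasDerivAt x (f (x t) + fun i => ∑ j, g (x t) i j * u (x t) j) t)
    (T : ℝ) (hT : T = |h (x 0)| ^ (1 - ρ) / (γ * (1 - ρ))) :
    ∀ t ≥ T, 0 ≤ h (x t) :=
  fcbf_finite_time_reachability_general f g h hC1 γ ρ hγ hρ1 u hcbf x hx T hT
end

section
/- Let γ > 0 and ρ ∈ [0,1), and let y : [0,∞) → ℝ be differentiable with y′(t) ≥ −γ·sign(y(t))·|y(t)|^ρ for all t ≥ 0. Then, setting T = |y(0)|^{1−ρ}/(γ(1−ρ)), one has y(t) ≥ 0 for all t ≥ T. -/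
open Set Filter Topology

lemma fcbf_lemA (γ ρ : ℝ) (hγ : 0 < γ) (hρ0 : 0 ≤ ρ) (hρ1 : ρ < 1) (y y' : ℝ → ℝ)
    (hderiv : ∀ t ≥ (0:ℝ), HasDerivAt y (y' t) t)
    (hineq : ∀ t ≥ (0:ℝ), y' t ≥ -γ * sgn (y t) * |y t| ^ ρ)
    (a b : ℝ) (ha : 0 ≤ a) (hab : a ≤ b) (hneg : ∀ u ∈ Icc a b, y u < 0) :
    (-(y b)) ^ (1-ρ) + γ*(1-ρ)*b ≤ (-(y a)) ^ (1-ρ) + γ*(1-ρ)*a := by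
  have h1ρ : 0 < 1 - ρ := by linarith
  set g : ℝ → ℝ := fun u => (-(y u)) ^ (1-ρ) + γ*(1-ρ)*u with hg
  have hD : ∀ u ∈ Icc a b,
      HasDerivAt g (-(y' u) * (1-ρ) * (-(y u)) ^ (1-ρ-1) + γ*(1-ρ)) u := by
    intro u hu
    have hu0 : (0:ℝ) ≤ u := le_trans ha hu.1
    have hx : 0 < -(y u) := by have := hneg u hu; linarith
    have h1 : HasDerivAt (fun v => (-(y v)) ^ (1-ρ))
        (-(y' u) * (1-ρ) * (-(y u)) ^ (1-ρ-1)) u :=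
      ((hderiv u hu0).neg).rpow_const (Or.inl (ne_of_gt hx))
    have h2 : HasDerivAt (fun v : ℝ => γ*(1-ρ)*v) (γ*(1-ρ)) u := by
      simpa using (hasDerivAt_id u).const_mul (γ*(1-ρ))
    exact h1.add h2
  have hbound : ∀ u ∈ Icc a b,
      -(y' u) * (1-ρ) * (-(y u)) ^ (1-ρ-1) + γ*(1-ρ) ≤ 0 := by
    intro u hu
    have hu0 : (0:ℝ) ≤ u := le_trans ha hu.1
    have hyu := hneg u hu
    have hx : 0 < -(y u) := by linarith
    have hs : sgn (y u) = -1 := by simp [sgn, not_lt.2 hyu.le, hyu]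
    have habs : |y u| = -(y u) := abs_of_neg hyu
    have hge : y' u ≥ γ * (-(y u)) ^ ρ := by
      have := hineq u hu0
      rw [hs, habs] at this
      linarith
    have hppos : 0 < (-(y u)) ^ (1-ρ-1) := Real.rpow_pos_of_pos hx _
    have hone : (-(y u)) ^ ρ * (-(y u)) ^ (1-ρ-1) = 1 := by
      rw [← Real.rpow_add hx]
      norm_num
    have key : γ * (-(y u)) ^ ρ * (1-ρ) * (-(y u)) ^ (1-ρ-1) = γ * (1-ρ) := by
      calc γ * (-(y u)) ^ ρ * (1-ρ) * (-(y u)) ^ (1-ρ-1)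
          = γ * (1-ρ) * ((-(y u)) ^ ρ * (-(y u)) ^ (1-ρ-1)) := by ring
        _ = γ * (1-ρ) := by rw [hone, mul_one]
    have hmul : -(y' u) * ((1-ρ) * (-(y u)) ^ (1-ρ-1)) ≤
        -(γ * (-(y u)) ^ ρ) * ((1-ρ) * (-(y u)) ^ (1-ρ-1)) :=
      mul_le_mul_of_nonneg_right (neg_le_neg hge)
        (mul_nonneg h1ρ.le hppos.le)
    nlinarith [hmul, key]
  have hanti : AntitoneOn g (Icc a b) := by
    apply antitoneOn_of_deriv_nonpos (convex_Icc a b)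
    · exact fun u hu => (hD u hu).continuousAt.continuousWithinAt
    · intro u hu
      rw [interior_Icc] at hu
      exact (hD u (Ioo_subset_Icc_self hu)).differentiableAt.differentiableWithinAt
    · intro u hu
      rw [interior_Icc] at hu
      rw [(hD u (Ioo_subset_Icc_self hu)).deriv]
      exact hbound u (Ioo_subset_Icc_self hu)
  exact hanti (left_mem_Icc.2 hab) (right_mem_Icc.2 hab) hab

lemma fcbf_lemB (γ ρ : ℝ) (hγ : 0 < γ) (hρ0 : 0 ≤ ρ) (hρ1 : ρ < 1) (y y' : ℝ → ℝ)
    (hderiv : ∀ t ≥ (0:ℝ), HasDerivAt y (y' t) t)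
    (hineq : ∀ t ≥ (0:ℝ), y' t ≥ -γ * sgn (y t) * |y t| ^ ρ)
    (t0 t : ℝ) (ht0 : 0 ≤ t0) (ht : t0 ≤ t) (hy0 : 0 ≤ y t0) : 0 ≤ y t := by
  by_contra hyt
  push_neg at hyt
  have h1ρ : 0 < 1 - ρ := by linarith
  have hcpos : 0 < γ * (1-ρ) := mul_pos hγ h1ρ
  have hcont : ContinuousOn y (Icc t0 t) := fun u hu =>
    ((hderiv u (le_trans ht0 hu.1)).continuousAt).continuousWithinAt
  set S := Icc t0 t ∩ y ⁻¹' Ici 0 with hS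
  have hSne : S.Nonempty := ⟨t0, ⟨left_mem_Icc.2 ht, hy0⟩⟩
  have hSbdd : BddAbove S := ⟨t, fun u hu => hu.1.2⟩
  have hSclosed : IsClosed S :=
    hcont.preimage_isClosed_of_isClosed isClosed_Icc isClosed_Ici
  set s := sSup S with hs
  have hsS : s ∈ S := hSclosed.csSup_mem hSne hSbdd
  have hst0 : t0 ≤ s := hsS.1.1
  have hs0 : 0 ≤ s := le_trans ht0 hst0
  have hsltt : s < t := by
    rcases lt_or_eq_of_le hsS.1.2 with h | h
    · exact h
    · exfalso; rw [h] at hsS; exact absurd hsS.2 (not_le.2 hyt)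
  have hnegafter : ∀ u, s < u → u ≤ t → y u < 0 := by
    intro u h1 h2
    by_contra h
    push_neg at h
    have hu : u ∈ S := ⟨⟨le_trans hst0 h1.le, h2⟩, h⟩
    exact absurd (le_csSup hSbdd hu) (not_le.2 h1)
  have hys0 : y s = 0 := by
    have hle : y s ≤ 0 := by
      have htend : Tendsto y (𝓝[>] s) (𝓝 (y s)) :=
        ((hderiv s hs0).continuousAt.tendsto).mono_left nhdsWithin_le_nhds
      have hev : ∀ᶠ u in 𝓝[>] s, y u ≤ 0 := by
        filter_upwards [Ioo_mem_nhdsGT_of_mem ⟨le_refl s, hsltt⟩] with u hu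
        exact (hnegafter u hu.1 hu.2.le).le
      exact le_of_tendsto htend hev
    have hge : (0:ℝ) ≤ y s := hsS.2
    linarith
  set F : ℝ → ℝ := fun u => (-(y u)) ^ (1-ρ) with hF
  have hGt : ∀ u ∈ Ioo s t, F t + γ*(1-ρ)*t ≤ F u + γ*(1-ρ)*u := by
    intro u hu
    exact fcbf_lemA γ ρ hγ hρ0 hρ1 y y' hderiv hineq u t (le_trans hs0 hu.1.le) hu.2.le
      (fun v hv => hnegafter v (lt_of_lt_of_le hu.1 hv.1) hv.2)
  have htendF : Tendsto (fun u => F u + γ*(1-ρ)*u) (𝓝[>] s) (𝓝 (F s + γ*(1-ρ)*s)) := by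
    have h2 : ContinuousAt F s :=
      (((hderiv s hs0).continuousAt).neg).rpow_const (Or.inr h1ρ.le)
    exact ((h2.add (continuousAt_const.mul continuousAt_id)).tendsto).mono_left
      nhdsWithin_le_nhds
  have hfinal : F t + γ*(1-ρ)*t ≤ F s + γ*(1-ρ)*s := by
    refine ge_of_tendsto htendF ?_
    filter_upwards [Ioo_mem_nhdsGT_of_mem ⟨le_refl s, hsltt⟩] with u hu
    exact hGt u hu
  have hFt : 0 < F t := Real.rpow_pos_of_pos (by linarith : (0:ℝ) < -(y t)) _
  have hFs : F s = 0 := by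
    rw [hF]; simp only [hys0, neg_zero]
    exact Real.zero_rpow h1ρ.ne'
  nlinarith [mul_lt_mul_of_pos_left hsltt hcpos]

/-- Scalar comparison lemma for the finite-time barrier inequality: if `γ > 0`, `ρ ∈ [0,1)`
and `y : [0,∞) → ℝ` is differentiable with `y'(t) ≥ -γ·sign(y(t))·|y(t)|^ρ` for all `t ≥ 0`,
then `y(t) ≥ 0` for all `t ≥ T` where `T = |y(0)|^{1-ρ}/(γ(1-ρ))`. -/
theorem fcbf_scalar_comparison
    (γ ρ : ℝ) (hγ : 0 < γ) (hρ0 : 0 ≤ ρ) (hρ1 : ρ < 1)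
    (y y' : ℝ → ℝ)
    (hderiv : ∀ t ≥ (0:ℝ), HasDerivAt y (y' t) t)
    (hineq : ∀ t ≥ (0:ℝ), y' t ≥ -γ * sgn (y t) * |y t| ^ ρ)
    (T : ℝ) (hT : T = |y 0| ^ (1 - ρ) / (γ * (1 - ρ))) :
    ∀ t ≥ T, 0 ≤ y t := by
  intro t ht'
  have h1ρ : 0 < 1 - ρ := by linarith
  have hden : 0 < γ * (1 - ρ) := mul_pos hγ h1ρ
  have hTnn : 0 ≤ T := by
    rw [hT]
    exact div_nonneg (Real.rpow_nonneg (abs_nonneg _) _) hden.le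
  obtain ⟨t0, ht0mem, ht0⟩ : ∃ t0, t0 ∈ Icc (0:ℝ) T ∧ 0 ≤ y t0 := by
    by_contra h
    push_neg at h
    have hneg : ∀ u ∈ Icc (0:ℝ) T, y u < 0 := fun u hu => h u hu
    have hy0neg : y 0 < 0 := hneg 0 (left_mem_Icc.2 hTnn)
    have hmain := fcbf_lemA γ ρ hγ hρ0 hρ1 y y' hderiv hineq 0 T le_rfl hTnn hneg
    have habs : -(y 0) = |y 0| := (abs_of_neg hy0neg).symm
    have hcT : γ*(1-ρ)*T = |y 0| ^ (1-ρ) := by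
      rw [hT]; field_simp
    have hFT : 0 < (-(y T)) ^ (1-ρ) :=
      Real.rpow_pos_of_pos (by linarith [hneg T (right_mem_Icc.2 hTnn)] : (0:ℝ) < -(y T)) _
    rw [habs] at hmain
    nlinarith
  exact fcbf_lemB γ ρ hγ hρ0 hρ1 y y' hderiv hineq t0 t ht0mem.1
    (le_trans ht0mem.2 ht') ht0
end

section
/- Let γ > 0 and ρ ∈ [0,1), and let y : [0,∞) → ℝ be differentiable with y′(t) ≥ −γ·sign(y(t))·|y(t)|^ρ for all t ≥ 0. If y(t₀) ≥ 0 for some t₀ ≥ 0, then y(t) ≥ 0 for all t ≥ t₀ (forward invariance of the nonnegative set under the finite-time barrier inequality). -/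
/-- Forward invariance of the nonnegative set under the finite-time barrier inequality:
if `γ > 0`, `ρ ∈ [0,1)` and `y : [0,∞) → ℝ` is differentiable with
`y'(t) ≥ -γ·sign(y(t))·|y(t)|^ρ` for all `t ≥ 0`, and `y(t₀) ≥ 0` for some `t₀ ≥ 0`,
then `y(t) ≥ 0` for all `t ≥ t₀`. -/
theorem fcbf_scalar_forward_invariance
    (γ ρ : ℝ) (hγ : 0 < γ) (hρ0 : 0 ≤ ρ) (hρ1 : ρ < 1)
    (y y' : ℝ → ℝ)
    (hderiv : ∀ t ≥ (0:ℝ), HasDerivAt y (y' t) t)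
    (hineq : ∀ t ≥ (0:ℝ), y' t ≥ -γ * sgn (y t) * |y t| ^ ρ)
    (t₀ : ℝ) (ht₀ : 0 ≤ t₀) (hy₀ : 0 ≤ y t₀) :
    ∀ t ≥ t₀, 0 ≤ y t := by
  intro t₁ ht₁
  by_contra hneg
  push_neg at hneg
  have hcont : ContinuousOn y (Set.Icc t₀ t₁) := fun x hx =>
    (hderiv x (ht₀.trans hx.1)).continuousAt.continuousWithinAt
  set S := Set.Icc t₀ t₁ ∩ y ⁻¹' Set.Ici 0 with hSdef
  have hne : S.Nonempty := ⟨t₀, ⟨le_refl _, ht₁⟩, hy₀⟩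
  have hbdd : BddAbove S := ⟨t₁, fun x hx => hx.1.2⟩
  have hclosed : IsClosed S :=
    hcont.preimage_isClosed_of_isClosed isClosed_Icc isClosed_Ici
  set s := sSup S with hs
  have hsmem : s ∈ S := hclosed.csSup_mem hne hbdd
  have hys : 0 ≤ y s := hsmem.2
  have hs0 : 0 ≤ s := ht₀.trans hsmem.1.1
  have hst₁ : s ≤ t₁ := hsmem.1.2
  have hlt : s < t₁ := by
    rcases hst₁.lt_or_eq with h | h
    · exact h
    · exact absurd (h ▸ hys) (not_le.mpr hneg)
  -- On (s, t₁), y is negative, so y' ≥ γ |y|^ρ ≥ 0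
  have hynegIoo : ∀ x ∈ Set.Ioo s t₁, y x < 0 := by
    intro x hx
    by_contra h
    push_neg at h
    have : x ∈ S := ⟨⟨hsmem.1.1.trans hx.1.le, hx.2.le⟩, h⟩
    exact absurd (le_csSup hbdd this) (not_le.mpr hx.1)
  have hmono : MonotoneOn y (Set.Icc s t₁) := by
    apply monotoneOn_of_deriv_nonneg (convex_Icc s t₁)
      (hcont.mono (Set.Icc_subset_Icc hsmem.1.1 le_rfl))
    · intro x hx
      rw [interior_Icc] at hx
      exact (hderiv x (hs0.trans hx.1.le)).differentiableAt.differentiableWithinAt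
    · intro x hx
      rw [interior_Icc] at hx
      have hx0 : (0:ℝ) ≤ x := hs0.trans hx.1.le
      rw [(hderiv x hx0).deriv]
      have hyx : y x < 0 := hynegIoo x hx
      have hsgn : sgn (y x) = -1 := by
        simp [sgn, hyx, not_lt.mpr hyx.le]
      have := hineq x hx0
      rw [hsgn] at this
      have hpow : (0:ℝ) ≤ |y x| ^ ρ := Real.rpow_nonneg (abs_nonneg _) ρ
      nlinarith
  have : y s ≤ y t₁ := hmono ⟨le_rfl, hst₁⟩ ⟨hst₁, le_rfl⟩ hst₁
  linarith
end

section
/- Let h : ℝⁿ → ℝ be continuously differentiable, let α be an extended class-K function, and let u : ℝⁿ → ℝᵐ be a continuous feedback such that for all x ∈ ℝⁿ, L_f h(x) + L_g h(x)·u(x) + α(h(x)) ≥ 0. Then every closed-loop trajectory x(·) with h(x(0)) ≥ 0 satisfies h(x(t)) ≥ 0 for all t ≥ 0; that is, the set Σ = {x ∈ ℝⁿ : h(x) ≥ 0} is forward invariant for the closed-loop system. -/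
/-!
Along a closed-loop trajectory, `y(t) = h(x(t))` satisfies `y' ≥ -α(y)`. Wherever `y < 0` we have
`α(y) ≤ α(0) = 0`, so `y' ≥ 0` there. If `y(t) < 0` for some `t`, take the last time `c ≤ t` with
`y(c) ≥ 0`; on `[c, t]` the function `y` is nondecreasing, hence `y(t) ≥ y(c) ≥ 0`, a contradiction.
-/

open Set

theorem exists_nonneg_and_neg_on_Ioc {y : ℝ → ℝ} {a b : ℝ} (hab : a ≤ b)
    (hy : ContinuousOn y (Icc a b)) (ha : 0 ≤ y a) :
    ∃ c ∈ Icc a b, 0 ≤ y c ∧ ∀ s ∈ Ioc c b, y s < 0 := by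
  have hclosed : IsClosed (Icc a b ∩ y ⁻¹' Ici 0) :=
    hy.preimage_isClosed_of_isClosed isClosed_Icc isClosed_Ici
  obtain ⟨c, ⟨hc, hyc⟩, hgreatest⟩ :=
    (isCompact_Icc.of_isClosed_subset hclosed inter_subset_left).exists_isGreatest
      ⟨a, left_mem_Icc.2 hab, ha⟩
  refine ⟨c, hc, hyc, fun s hs => ?_⟩
  by_contra! hys
  exact (hgreatest ⟨⟨hc.1.trans hs.1.le, hs.2⟩, hys⟩).not_gt hs.1

theorem nonneg_on_Icc_of_deriv_nonneg_of_neg {y y' : ℝ → ℝ} {a b : ℝ}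
    (hy : ContinuousOn y (Icc a b)) (hderiv : ∀ s ∈ Ioo a b, HasDerivAt y (y' s) s)
    (hy' : ∀ s ∈ Ioo a b, y s < 0 → 0 ≤ y' s) (ha : 0 ≤ y a) :
    ∀ t ∈ Icc a b, 0 ≤ y t := by
  intro t ht
  obtain ⟨c, hc, hyc, hneg⟩ :=
    exists_nonneg_and_neg_on_Ioc ht.1 (hy.mono (Icc_subset_Icc_right ht.2)) ha
  have hsub : Icc c t ⊆ Icc a b := Icc_subset_Icc hc.1 ht.2
  have hIoo : Ioo c t ⊆ Ioo a b := Ioo_subset_Ioo hc.1 ht.2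
  have hmono : MonotoneOn y (Icc c t) := by
    refine monotoneOn_of_deriv_nonneg (convex_Icc c t) (hy.mono hsub) ?_ ?_ <;> rw [interior_Icc]
    · exact fun s hs => (hderiv s (hIoo hs)).differentiableAt.differentiableWithinAt
    · intro s hs
      rw [(hderiv s (hIoo hs)).deriv]
      exact hy' s (hIoo hs) (hneg s (Ioo_subset_Ioc_self hs))
  exact hyc.trans (hmono (left_mem_Icc.2 hc.2) (right_mem_Icc.2 hc.2) hc.2)

theorem nonneg_comp_of_barrier {E : Type*} [NormedAddCommGroup E] [NormedSpace ℝ E]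
    {V : E → E} {h : E → ℝ} {α : ℝ → ℝ} (hh : Differentiable ℝ h) (hα : Monotone α)
    (hα0 : α 0 = 0) (hbarrier : ∀ z, fderiv ℝ h z (V z) + α (h z) ≥ 0) {x : ℝ → E}
    (hx : ∀ t ≥ (0 : ℝ), HasDerivAt x (V (x t)) t) (h0 : 0 ≤ h (x 0)) :
    ∀ t ≥ (0 : ℝ), 0 ≤ h (x t) := by
  have hderiv : ∀ t ≥ (0 : ℝ), HasDerivAt (h ∘ x) (fderiv ℝ h (x t) (V (x t))) t :=
    fun t ht => (hh (x t)).hasFDerivAt.comp_hasDerivAt t (hx t ht)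
  intro t ht
  refine nonneg_on_Icc_of_deriv_nonneg_of_neg (y := h ∘ x)
    (fun s hs => (hderiv s hs.1).continuousAt.continuousWithinAt)
    (fun s hs => hderiv s hs.1.le) (fun s _ hneg => ?_) h0 t ⟨ht, le_rfl⟩
  have hαneg : α (h (x s)) ≤ 0 := hα0 ▸ hα hneg.le
  linarith [hbarrier (x s)]

theorem zcbf_forward_invariance_general {n m : ℕ}
    (f : (Fin n → ℝ) → (Fin n → ℝ))
    (g : (Fin n → ℝ) → (Fin n → Fin m → ℝ))
    (h : (Fin n → ℝ) → ℝ) (hC1 : ContDiff ℝ 1 h)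
    (α : ℝ → ℝ) (hα_mono : StrictMono α) (hα0 : α 0 = 0)
    (u : (Fin n → ℝ) → (Fin m → ℝ))
    (hcbf : ∀ x : Fin n → ℝ,
      fderiv ℝ h x (f x) + fderiv ℝ h x (fun i => ∑ j, g x i j * u x j) + α (h x) ≥ 0)
    (x : ℝ → (Fin n → ℝ))
    (hx : ∀ t ≥ (0:ℝ),
      HasDerivAt x (f (x t) + fun i => ∑ j, g (x t) i j * u (x t) j) t)
    (h0 : 0 ≤ h (x 0)) :
    ∀ t ≥ (0:ℝ), 0 ≤ h (x t) :=
  nonneg_comp_of_barrier (V := fun z => f z + fun i => ∑ j, g z i j * u z j)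
    (hC1.differentiable one_ne_zero) hα_mono.monotone hα0
    (fun z => by simpa only [map_add] using hcbf z) hx h0

/-- Zeroing control barrier function invariance (Corollary 1 of Xu et al.):
if `h` is continuously differentiable, `α` is an extended class-K function
(locally Lipschitz, strictly increasing, `α(0) = 0`), and the continuous feedback `u`
satisfies `L_f h(x) + L_g h(x)·u(x) + α(h(x)) ≥ 0` for all `x`, then the set
`Σ = {x : h(x) ≥ 0}` is forward invariant for the closed-loop system. -/
theorem zcbf_forward_invariance {n m : ℕ}
    (f : (Fin n → ℝ) → (Fin n → ℝ))
    (g : (Fin n → ℝ) → (Fin n → Fin m → ℝ))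
    (hf : LocallyLipschitz f) (hg : LocallyLipschitz g)
    (h : (Fin n → ℝ) → ℝ) (hC1 : ContDiff ℝ 1 h)
    (α : ℝ → ℝ) (hα_lip : LocallyLipschitz α) (hα_mono : StrictMono α) (hα0 : α 0 = 0)
    (u : (Fin n → ℝ) → (Fin m → ℝ)) (hu : Continuous u)
    (hcbf : ∀ x : Fin n → ℝ,
      fderiv ℝ h x (f x) + fderiv ℝ h x (fun i => ∑ j, g x i j * u x j) + α (h x) ≥ 0)
    (x : ℝ → (Fin n → ℝ))
    (hx : ∀ t ≥ (0:ℝ),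
      HasDerivAt x (f (x t) + fun i => ∑ j, g (x t) i j * u (x t) j) t)
    (h0 : 0 ≤ h (x 0)) :
    ∀ t ≥ (0:ℝ), 0 ≤ h (x t) :=
  zcbf_forward_invariance_general f g h hC1 α hα_mono hα0 u hcbf x hx h0
end

section
/- Let α be an extended class-K function and let y : [0,∞) → ℝ be differentiable with y′(t) ≥ −α(y(t)) for all t ≥ 0. If y(0) ≥ 0, then y(t) ≥ 0 for all t ≥ 0. -/
/-- Scalar comparison lemma for the zeroing barrier inequality: if `α` is an extended
class-K function (locally Lipschitz, strictly increasing, `α(0) = 0`) and `y : [0,∞) → ℝ`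
is differentiable with `y'(t) ≥ -α(y(t))` for all `t ≥ 0` and `y(0) ≥ 0`, then
`y(t) ≥ 0` for all `t ≥ 0`. -/
theorem zcbf_scalar_comparison
    (α : ℝ → ℝ) (hα_lip : LocallyLipschitz α) (hα_mono : StrictMono α) (hα0 : α 0 = 0)
    (y y' : ℝ → ℝ)
    (hderiv : ∀ t ≥ (0:ℝ), HasDerivAt y (y' t) t)
    (hineq : ∀ t ≥ (0:ℝ), y' t ≥ -α (y t))
    (hy0 : 0 ≤ y 0) :
    ∀ t ≥ (0:ℝ), 0 ≤ y t := by
  intro t₁ ht₁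
  by_contra hneg
  push_neg at hneg
  have hycont : ∀ x ∈ Set.Icc (0:ℝ) t₁, ContinuousAt y x := fun x hx =>
    (hderiv x hx.1).continuousAt
  -- the set of times in [0, t₁] where y is nonnegative
  set S : Set ℝ := {x | x ∈ Set.Icc (0:ℝ) t₁ ∧ 0 ≤ y x} with hS
  have h0S : (0:ℝ) ∈ S := ⟨⟨le_refl 0, ht₁⟩, hy0⟩
  have hSne : S.Nonempty := ⟨0, h0S⟩
  have hSbdd : BddAbove S := ⟨t₁, fun x hx => hx.1.2⟩
  have hSclosed : IsClosed S := by
    have heq : S = Set.Icc (0:ℝ) t₁ ∩ y ⁻¹' Set.Ici 0 := by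
      ext x; simp [hS, Set.mem_inter_iff]
    rw [heq]
    exact ContinuousOn.preimage_isClosed_of_isClosed
      (continuousOn_of_forall_continuousAt hycont) isClosed_Icc isClosed_Ici
  obtain ⟨s, hs, hsS⟩ : ∃ s, sSup S = s ∧ s ∈ S :=
    ⟨sSup S, rfl, hSclosed.csSup_mem hSne hSbdd⟩
  have hsIcc : s ∈ Set.Icc (0:ℝ) t₁ := hsS.1
  have hys : 0 ≤ y s := hsS.2
  have hslt : s < t₁ := lt_of_le_of_ne hsIcc.2 (by rintro rfl; exact absurd hys (not_le.mpr hneg))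
  -- on (s, t₁], y is negative
  have hneg' : ∀ x, s < x → x ≤ t₁ → y x < 0 := by
    intro x hsx hxt
    by_contra h
    push_neg at h
    have : x ∈ S := ⟨⟨le_trans hsIcc.1 hsx.le, hxt⟩, h⟩
    have := le_csSup hSbdd this
    rw [hs] at this
    exact absurd this (not_le.mpr hsx)
  -- y is strictly monotone on [s, t₁]
  have hmono : StrictMonoOn y (Set.Icc s t₁) := by
    apply StrictMonoOn.mono (s := Set.Icc s t₁) ?_ le_rfl
    apply strictMonoOn_of_deriv_pos (convex_Icc s t₁)
    · exact continuousOn_of_forall_continuousAt fun x hx =>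
        hycont x ⟨le_trans hsIcc.1 hx.1, hx.2⟩
    · intro x hx
      rw [interior_Icc] at hx
      have hx0 : (0:ℝ) ≤ x := le_trans hsIcc.1 hx.1.le
      rw [(hderiv x hx0).deriv]
      have hyx : y x < 0 := hneg' x hx.1 hx.2.le
      have : α (y x) < 0 := by
        have := hα_mono hyx
        rwa [hα0] at this
      have := hineq x hx0
      linarith
  have := hmono ⟨le_rfl, hsIcc.2⟩ ⟨hslt.le, le_rfl⟩ hslt
  linarith
end

section
/- Let q ≥ 1 and 1 ≤ q′ ≤ q, let h₁,…,h_q : ℝⁿ → ℝ be continuously differentiable, and suppose each hᵢ with i ∈ {1,…,q′} is bounded above: hᵢ(x) < Mᵢ for all x ∈ ℝⁿ, with Mᵢ > 0. Let α₁,…,α_{q′} > 0, γ > 0, ρ ∈ [0,1), and let u : ℝⁿ → ℝᵐ be a continuous feedback such that for all x ∈ ℝⁿ: (i) ∑_{i=1}^{q′} αᵢ·(L_f hᵢ(x) + L_g hᵢ(x)·u(x)) + γ·sign( min{h₁(x),…,h_{q′}(x)} ) ≥ 0, and (ii) for every i ∈ {q′+1,…,q}, L_f hᵢ(x) + L_g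 hᵢ(x)·u(x) + γ·sign(hᵢ(x))·|hᵢ(x)|^ρ ≥ 0. Then for every closed-loop trajectory x(·), with arbitrary initial condition x₀ ∈ ℝⁿ, there exists a finite time T ≥ 0 such that hᵢ(x(T)) ≥ 0 for all i ∈ {1,…,q}, i.e. x(T) ∈ Γ = ⋂_{i=1}^{q} {x ∈ ℝⁿ : hᵢ(x) ≥ 0}. -/
open Set Filter

theorem sgn_of_neg {z : ℝ} (hz : z < 0) : sgn z = -1 := by
  simp [sgn, hz, hz.not_gt]

theorem tendsto_atTop_of_eventually_const_le_deriv {V V' : ℝ → ℝ} {c : ℝ} (hc : 0 < c)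
    (hV : ∀ᶠ t in atTop, HasDerivAt V (V' t) t ∧ c ≤ V' t) : Tendsto V atTop atTop := by
  obtain ⟨a, ha⟩ := eventually_atTop.1 hV
  have hlin : ∀ t ≥ a, c * t + (V a - c * a) ≤ V t := fun t ht => by
    have := (convex_Ici a).mul_sub_le_image_sub_of_le_deriv
      (fun s hs => (ha s hs).1.continuousAt.continuousWithinAt)
      (fun s hs => (ha s (interior_subset hs)).1.differentiableAt.differentiableWithinAt)
      (fun s hs => (ha s (interior_subset hs)).1.deriv ▸ (ha s (interior_subset hs)).2)
      a self_mem_Ici t ht ht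
    linarith
  exact tendsto_atTop_mono' atTop (eventually_atTop.2 ⟨a, hlin⟩)
    (tendsto_atTop_add_const_right _ _ (tendsto_id.const_mul_atTop hc))

theorem nonneg_of_deriv_nonneg_of_neg {φ φ' : ℝ → ℝ} {a b : ℝ} (hab : a ≤ b)
    (hφ : ∀ t ∈ Icc a b, HasDerivAt φ (φ' t) t) (hφ' : ∀ t ∈ Icc a b, φ t < 0 → 0 ≤ φ' t)
    (ha : 0 ≤ φ a) : 0 ≤ φ b := by
  by_contra! hb
  have hcont : ContinuousOn φ (Icc a b) := fun t ht => (hφ t ht).continuousAt.continuousWithinAt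
  obtain ⟨s, ⟨⟨has, hsb⟩, hs⟩, hlast⟩ :=
    (isCompact_Icc.of_isClosed_subset (hcont.preimage_isClosed_of_isClosed isClosed_Icc
      isClosed_Ici) inter_subset_left).exists_isGreatest ⟨a, ⟨le_rfl, hab⟩, ha⟩
  have hneg : ∀ t ∈ Ioo s b, φ t < 0 := fun t ht => by
    by_contra! hnn
    exact ht.1.not_ge (hlast ⟨⟨has.trans ht.1.le, ht.2.le⟩, hnn⟩)
  have hsub : Icc s b ⊆ Icc a b := Icc_subset_Icc_left has
  have hmono : MonotoneOn φ (Icc s b) := by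
    refine monotoneOn_of_hasDerivWithinAt_nonneg (f' := φ') (convex_Icc s b) (hcont.mono hsub)
      ?_ ?_ <;> rw [interior_Icc] <;> intro t ht
    · exact (hφ t (hsub (Ioo_subset_Icc_self ht))).hasDerivWithinAt
    · exact hφ' t (hsub (Ioo_subset_Icc_self ht)) (hneg t ht)
  exact (hs.trans (hmono (left_mem_Icc.2 hsb) (right_mem_Icc.2 hsb) hsb)).not_gt hb

theorem exists_nonneg_of_rpow_le_deriv {φ φ' : ℝ → ℝ} {a c ρ : ℝ} (hc : 0 < c) (hρ : ρ < 1)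
    (hφ : ∀ t ≥ a, HasDerivAt φ (φ' t) t) (hφ' : ∀ t ≥ a, φ t < 0 → c * (-φ t) ^ ρ ≤ φ' t) :
    ∃ t ≥ a, 0 ≤ φ t := by
  by_contra! hneg
  have hW : ∀ t ≥ a, HasDerivAt (fun s => -(-φ s) ^ (1 - ρ)) ((1 - ρ) * (-φ t) ^ (-ρ) * φ' t) t
      ∧ c * (1 - ρ) ≤ (1 - ρ) * (-φ t) ^ (-ρ) * φ' t := fun t ht => by
    have hpos : 0 < -φ t := neg_pos.2 (hneg t ht)
    refine ⟨?_, ?_⟩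
    · refine ((hφ t ht).neg.rpow_const (p := 1 - ρ) (Or.inl hpos.ne')).neg.congr_deriv ?_
      rw [show 1 - ρ - 1 = -ρ by ring, Pi.neg_apply]
      ring
    · have hinv : (-φ t) ^ (-ρ) * (-φ t) ^ ρ = 1 := by
        rw [← Real.rpow_add hpos, neg_add_cancel, Real.rpow_zero]
      calc c * (1 - ρ) = (1 - ρ) * (-φ t) ^ (-ρ) * (c * (-φ t) ^ ρ) := by
            linear_combination (-(c * (1 - ρ))) * hinv
        _ ≤ (1 - ρ) * (-φ t) ^ (-ρ) * φ' t := by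
            gcongr
            exact hφ' t ht (hneg t ht)
  obtain ⟨t, hWt, ht⟩ := (((tendsto_atTop_of_eventually_const_le_deriv (mul_pos hc (sub_pos.2 hρ))
    (eventually_atTop.2 ⟨a, hW⟩)).eventually_gt_atTop 0).and (eventually_ge_atTop a)).exists
  exact hWt.not_ge (neg_nonpos.2 (Real.rpow_nonneg (neg_nonneg.2 (hneg t ht).le) _))

theorem eventually_nonneg_of_deriv_add_sgn_mul_rpow_nonneg {φ φ' : ℝ → ℝ} {a c ρ : ℝ}
    (hc : 0 < c) (hρ : ρ < 1) (hφ : ∀ t ≥ a, HasDerivAt φ (φ' t) t)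
    (hφ' : ∀ t ≥ a, φ' t + c * sgn (φ t) * |φ t| ^ ρ ≥ 0) : ∀ᶠ t in atTop, 0 ≤ φ t := by
  have hneg : ∀ t ≥ a, φ t < 0 → c * (-φ t) ^ ρ ≤ φ' t := fun t ht hφt => by
    have := hφ' t ht
    rw [sgn_of_neg hφt, abs_of_neg hφt] at this
    linarith
  obtain ⟨t₀, ht₀, hφt₀⟩ := exists_nonneg_of_rpow_le_deriv hc hρ hφ hneg
  refine eventually_atTop.2 ⟨t₀, fun t ht => nonneg_of_deriv_nonneg_of_neg ht
    (fun s hs => hφ s (ht₀.trans hs.1)) (fun s hs hφs => ?_) hφt₀⟩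
  exact (mul_nonneg hc.le (Real.rpow_nonneg (neg_nonneg.2 hφs.le) ρ)).trans
    (hneg s (ht₀.trans hs.1) hφs)

theorem frequently_nonneg_of_deriv_add_sgn_nonneg_of_le {V V' m : ℝ → ℝ} {a γ B : ℝ}
    (hγ : 0 < γ) (hV : ∀ t ≥ a, HasDerivAt V (V' t) t) (hVB : ∀ t, V t ≤ B)
    (hV' : ∀ t ≥ a, V' t + γ * sgn (m t) ≥ 0) : ∃ᶠ t in atTop, 0 ≤ m t := by
  intro hneg
  simp only [not_le] at hneg
  have hV_growth : ∀ᶠ t in atTop, HasDerivAt V (V' t) t ∧ γ ≤ V' t :=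
    (hneg.and (eventually_ge_atTop a)).mono fun t ⟨hm, ht⟩ => ⟨hV t ht, by
      have := hV' t ht
      rw [sgn_of_neg hm] at this
      linarith⟩
  obtain ⟨t, ht⟩ :=
    ((tendsto_atTop_of_eventually_const_le_deriv hγ hV_growth).eventually_gt_atTop B).exists
  exact ht.not_ge (hVB t)

theorem composite_fcbf_finite_time_general {n m q : ℕ} (q' : ℕ)
    (h : Fin q → (Fin n → ℝ) → ℝ) (hC1 : ∀ i, ContDiff ℝ 1 (h i))
    (M : Fin q → ℝ)
    (hbdd : ∀ i : Fin q, (i : ℕ) < q' → ∀ x : Fin n → ℝ, h i x < M i)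
    (f : (Fin n → ℝ) → (Fin n → ℝ))
    (g : (Fin n → ℝ) → (Fin n → Fin m → ℝ))
    (α : Fin q → ℝ) (hα : ∀ i : Fin q, (i : ℕ) < q' → 0 < α i)
    (γ ρ : ℝ) (hγ : 0 < γ) (hρ1 : ρ < 1)
    (u : (Fin n → ℝ) → (Fin m → ℝ))
    (hconstraint1 : ∀ x : Fin n → ℝ,
      (∑ i ∈ Finset.univ.filter (fun i : Fin q => (i : ℕ) < q'),
          α i * (fderiv ℝ (h i) x (f x)
            + fderiv ℝ (h i) x (fun r => ∑ j, g x r j * u x j)))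
        + γ * sgn (⨅ i : {i : Fin q // (i : ℕ) < q'}, h i.1 x) ≥ 0)
    (hconstraint2 : ∀ x : Fin n → ℝ, ∀ i : Fin q, q' ≤ (i : ℕ) →
      fderiv ℝ (h i) x (f x) + fderiv ℝ (h i) x (fun r => ∑ j, g x r j * u x j)
        + γ * sgn (h i x) * |h i x| ^ ρ ≥ 0)
    (x : ℝ → (Fin n → ℝ))
    (hx : ∀ t ≥ (0:ℝ),
      HasDerivAt x (f (x t) + fun r => ∑ j, g (x t) r j * u (x t) j) t) :
    ∃ T : ℝ, 0 ≤ T ∧ ∀ i : Fin q, 0 ≤ h i (x T) := by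
  have hderiv : ∀ i, ∀ t ≥ (0 : ℝ), HasDerivAt (fun s => h i (x s))
      (fderiv ℝ (h i) (x t) (f (x t))
        + fderiv ℝ (h i) (x t) (fun r => ∑ j, g (x t) r j * u (x t) j)) t := fun i t ht =>
    (((hC1 i).differentiable one_ne_zero _).hasFDerivAt.comp_hasDerivAt t (hx t ht)).congr_deriv
      (map_add _ _ _)
  have hlate : ∀ᶠ t in atTop, ∀ i : Fin q, q' ≤ (i : ℕ) → 0 ≤ h i (x t) :=
    eventually_all.2 fun i => eventually_imp_distrib_left.2 fun hi =>
      eventually_nonneg_of_deriv_add_sgn_mul_rpow_nonneg hγ hρ1 (hderiv i)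
        fun t _ => hconstraint2 (x t) i hi
  have hearly : ∃ᶠ t in atTop, 0 ≤ ⨅ i : {i : Fin q // (i : ℕ) < q'}, h i.1 (x t) :=
    frequently_nonneg_of_deriv_add_sgn_nonneg_of_le hγ
      (fun t ht => HasDerivAt.fun_sum fun i _ => (hderiv i t ht).const_mul (α i))
      (fun t => Finset.sum_le_sum fun i hi =>
        mul_le_mul_of_nonneg_left (hbdd i (Finset.mem_filter.1 hi).2 (x t)).le
          (hα i (Finset.mem_filter.1 hi).2).le)
      fun t _ => hconstraint1 (x t)
  obtain ⟨T, hT, hlateT, hT0⟩ := (hearly.and_eventually (hlate.and (eventually_ge_atTop 0))).exists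
  refine ⟨T, hT0, fun i => ?_⟩
  rcases lt_or_ge (i : ℕ) q' with hi | hi
  · exact hT.trans (ciInf_le (finite_range _).bddBelow (⟨i, hi⟩ : {j : Fin q // (j : ℕ) < q'}))
  · exact hlateT i hi

/-- Composite finite time control barrier functions (Theorem 1): given `q ≥ q' ≥ 1`
continuously differentiable barriers `h₁,…,h_q` with the first `q'` bounded above, weights
`αᵢ > 0`, `γ > 0`, `ρ ∈ [0,1)`, and a continuous feedback `u` satisfying the composite
constraint (i) and the individual constraints (ii), every closed-loop trajectory reaches
`Γ = ⋂ᵢ {x : hᵢ(x) ≥ 0}` at some finite time `T`. -/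
theorem composite_fcbf_finite_time {n m q : ℕ} (q' : ℕ) (hq'1 : 1 ≤ q') (hq'q : q' ≤ q)
    (h : Fin q → (Fin n → ℝ) → ℝ) (hC1 : ∀ i, ContDiff ℝ 1 (h i))
    (M : Fin q → ℝ) (hMpos : ∀ i : Fin q, (i : ℕ) < q' → 0 < M i)
    (hbdd : ∀ i : Fin q, (i : ℕ) < q' → ∀ x : Fin n → ℝ, h i x < M i)
    (f : (Fin n → ℝ) → (Fin n → ℝ))
    (g : (Fin n → ℝ) → (Fin n → Fin m → ℝ))
    (hf : LocallyLipschitz f) (hg : LocallyLipschitz g)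
    (α : Fin q → ℝ) (hα : ∀ i : Fin q, (i : ℕ) < q' → 0 < α i)
    (γ ρ : ℝ) (hγ : 0 < γ) (hρ0 : 0 ≤ ρ) (hρ1 : ρ < 1)
    (u : (Fin n → ℝ) → (Fin m → ℝ)) (hu : Continuous u)
    (hconstraint1 : ∀ x : Fin n → ℝ,
      (∑ i ∈ Finset.univ.filter (fun i : Fin q => (i : ℕ) < q'),
          α i * (fderiv ℝ (h i) x (f x)
            + fderiv ℝ (h i) x (fun r => ∑ j, g x r j * u x j)))
        + γ * sgn (⨅ i : {i : Fin q // (i : ℕ) < q'}, h i.1 x) ≥ 0)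
    (hconstraint2 : ∀ x : Fin n → ℝ, ∀ i : Fin q, q' ≤ (i : ℕ) →
      fderiv ℝ (h i) x (f x) + fderiv ℝ (h i) x (fun r => ∑ j, g x r j * u x j)
        + γ * sgn (h i x) * |h i x| ^ ρ ≥ 0)
    (x : ℝ → (Fin n → ℝ))
    (hx : ∀ t ≥ (0:ℝ),
      HasDerivAt x (f (x t) + fun r => ∑ j, g (x t) r j * u (x t) j) t) :
    ∃ T : ℝ, 0 ≤ T ∧ ∀ i : Fin q, 0 ≤ h i (x T) :=
  composite_fcbf_finite_time_general q' h hC1 M hbdd f g α hα γ ρ hγ hρ1 u hconstraint1 hconstraint2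
    x hx
end

section
/- Let q′ ≥ 1, let y₁,…,y_{q′} : [0,∞) → ℝ be differentiable functions such that yᵢ(t) ≤ Mᵢ for all t ≥ 0 and each i (with constants Mᵢ ∈ ℝ), and let α₁,…,α_{q′} > 0 and γ > 0. Suppose that for every t ≥ 0 at which min{y₁(t),…,y_{q′}(t)} < 0 one has ∑_{i=1}^{q′} αᵢ·yᵢ′(t) ≥ γ. Then for every T′ ≥ 0 there exists a finite time T ≥ T′ such that min{y₁(T),…,y_{q′}(T)} ≥ 0. -/
/-!
If every time after `T'` had some negative barrier, the weighted sum `∑ αᵢ yᵢ` would grow at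
rate at least `γ` for ever, which its upper bound `∑ αᵢ Mᵢ` forbids.
-/

open Set

theorem exists_gt_hasDerivAt_lt_of_bddAbove {f f' : ℝ → ℝ} {a γ : ℝ} (hγ : 0 < γ)
    (hf : ∀ t ≥ a, HasDerivAt f (f' t) t) (hbdd : BddAbove (f '' Ici a)) :
    ∃ t > a, f' t < γ := by
  by_contra! hgrowth
  obtain ⟨S, hS⟩ := hbdd
  have hlinear : ∀ b ≥ a, γ * (b - a) ≤ f b - f a := by
    refine fun b hb => (convex_Ici a).mul_sub_le_image_sub_of_le_deriv
      (fun t ht => (hf t ht).continuousAt.continuousWithinAt)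
      (fun t ht => (hf t (interior_subset ht)).differentiableAt.differentiableWithinAt)
      (fun t ht => ?_) a self_mem_Ici b hb hb
    rw [interior_Ici] at ht
    rw [(hf t ht.le).deriv]
    exact hgrowth t ht
  have hfa_le : f a ≤ S := hS (mem_image_of_mem f self_mem_Ici)
  -- past the time `(S - f a) / γ` after which growth at rate `γ` would exceed `S`
  set b := a + (S - f a) / γ + 1
  have hab : a ≤ b := by
    have : 0 ≤ (S - f a) / γ := div_nonneg (by linarith) hγ.le
    linarith
  have hγb : γ * (b - a) = S - f a + γ := by
    simp only [b]
    field_simp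
    ring
  have hfb_le : f b ≤ S := hS (mem_image_of_mem f hab)
  linarith [hlinear b hab]

theorem composite_fcbf_scalar_core_general
    (q' : ℕ)
    (y y' : Fin q' → ℝ → ℝ)
    (hderiv : ∀ i, ∀ t ≥ (0:ℝ), HasDerivAt (y i) (y' i t) t)
    (M : Fin q' → ℝ) (hbdd : ∀ i, ∀ t ≥ (0:ℝ), y i t ≤ M i)
    (α : Fin q' → ℝ) (hα : ∀ i, 0 < α i)
    (γ : ℝ) (hγ : 0 < γ)
    (hineq : ∀ t ≥ (0:ℝ), (⨅ i, y i t) < 0 → γ ≤ ∑ i, α i * y' i t) :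
    ∀ T' ≥ (0:ℝ), ∃ T ≥ T', 0 ≤ ⨅ i, y i T := by
  intro T' hT'
  by_contra! hneg
  have hsum_deriv : ∀ t ≥ T', HasDerivAt (fun s => ∑ i, α i * y i s) (∑ i, α i * y' i t) t :=
    fun t ht => HasDerivAt.fun_sum fun i _ => (hderiv i t (hT'.trans ht)).const_mul (α i)
  have hsum_bdd : BddAbove ((fun s => ∑ i, α i * y i s) '' Ici T') := by
    refine ⟨∑ i, α i * M i, ?_⟩
    rintro _ ⟨t, ht, rfl⟩
    exact Finset.sum_le_sum fun i _ =>
      mul_le_mul_of_nonneg_left (hbdd i t (hT'.trans ht)) (hα i).le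
  obtain ⟨t, ht, hslow⟩ := exists_gt_hasDerivAt_lt_of_bddAbove hγ hsum_deriv hsum_bdd
  exact hslow.not_ge (hineq t (hT'.trans ht.le) (hneg t ht.le))

/-- Scalar core of the composite finite-time control barrier function theorem:
if the bounded differentiable functions `y₁,…,y_{q'}` satisfy
`∑ αᵢ·yᵢ'(t) ≥ γ` whenever `min{y₁(t),…,y_{q'}(t)} < 0`, then after any time `T'`
there is a finite time `T ≥ T'` at which `min{y₁(T),…,y_{q'}(T)} ≥ 0`. -/
theorem composite_fcbf_scalar_core (q' : ℕ) (hq' : 1 ≤ q')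
    (y y' : Fin q' → ℝ → ℝ)
    (hderiv : ∀ i, ∀ t ≥ (0:ℝ), HasDerivAt (y i) (y' i t) t)
    (M : Fin q' → ℝ) (hbdd : ∀ i, ∀ t ≥ (0:ℝ), y i t ≤ M i)
    (α : Fin q' → ℝ) (hα : ∀ i, 0 < α i)
    (γ : ℝ) (hγ : 0 < γ)
    (hineq : ∀ t ≥ (0:ℝ), (⨅ i, y i t) < 0 → γ ≤ ∑ i, α i * y' i t) :
    ∀ T' ≥ (0:ℝ), ∃ T ≥ T', 0 ≤ ⨅ i, y i T :=
  composite_fcbf_scalar_core_general q' y y' hderiv M hbdd α hα γ hγ hineq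
end

section
/- Every descendant satisfies its specification: if σ : ℕ → 2^{Π_aug} is the flattened word of a descendant with data (p, k, ℓ, J₁, J₄, J₂¹,…,J₂ᵏ, J₃¹,…,J₃ˡ, O₂, O₃), then σ satisfies □J₁ (J₁ ⊆ σ(n) for every n ∈ ℕ), σ satisfies ◇J₂ʲ for every j ∈ {1,…,k} (for each j there exists n with J₂ʲ ⊆ σ(n)), σ satisfies □◇J₃ʲ for every j ∈ {1,…,ℓ} (for each j and every N there exists n ≥ N with J₃ʲ ⊆ σ(n)), and σ satisfies ◇□J₄ (there exists N such that J₄ ⊆ σ(n) for all n ≥ N). -/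
/-- A literal over `N` atomic propositions: `(true, m)` is the atomic proposition `πₘ`
and `(false, m)` is its negation `π̄ₘ`. -/
abbrev Literal (N : ℕ) := Bool × Fin N

/-- A descendant of a lasso template (Definition 7 of the paper), given in block form:
block lengths `len i ≥ 1` (blocks indexed from `0`, so block `i` here is block `i+1` of
the paper) and sets of literals `blk i j` (`j < len i`), each containing exactly one of
`πₘ`, `π̄ₘ` for every `m`, satisfying conditions (1)–(5) of Definition 7. -/
structure Descendant (N : ℕ) where
  /-- number of prefix blocks `p ≥ 1` -/
  p : ℕ
  /-- number of reachability sets, `0 ≤ k ≤ p` -/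
  k : ℕ
  /-- number of recurrence sets `ℓ ≥ 1` -/
  ell : ℕ
  hp : 1 ≤ p
  hk : k ≤ p
  hell : 1 ≤ ell
  /-- the always literal set `J₁` -/
  J1 : Set (Literal N)
  /-- the persistence literal set `J₄` -/
  J4 : Set (Literal N)
  /-- the reachability literal sets `J₂¹,…,J₂ᵏ` -/
  J2 : Fin k → Set (Literal N)
  /-- the recurrence literal sets `J₃¹,…,J₃ˡ` -/
  J3 : Fin ell → Set (Literal N)
  /-- the lasso template enumeration `O₂` -/
  O2 : Equiv.Perm (Fin k)
  /-- the lasso template enumeration `O₃` -/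
  O3 : Equiv.Perm (Fin ell)
  /-- block lengths `nᵢ` -/
  len : ℕ → ℕ
  hlen : ∀ i, 1 ≤ len i
  /-- the sets `σ_{i,j} ⊆ Π_aug`, for `j < len i` -/
  blk : ℕ → ℕ → Set (Literal N)
  /-- each `σ_{i,j}` contains exactly one of `πₘ` and `π̄ₘ` for every `m` -/
  hexact : ∀ i j, j < len i → ∀ m : Fin N, ((true, m) ∈ blk i j ↔ (false, m) ∉ blk i j)
  /-- condition (1): `J₁ ⊆ σ_{i,j}` for all prefix blocks -/
  cond1 : ∀ i j, i < p → j < len i → J1 ⊆ blk i j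
  /-- condition (2): `J₂^{O₂(i)} ⊆ σ_{i,nᵢ}` for `i ∈ {1,…,k}` -/
  cond2 : ∀ i : Fin k, J2 (O2 i) ⊆ blk (i : ℕ) (len (i : ℕ) - 1)
  /-- condition (3): `J₄ ⊆ σ_{p,n_p}` -/
  cond3 : J4 ⊆ blk (p - 1) (len (p - 1) - 1)
  /-- condition (4): `J₃^{O₃(i)} ⊆ σ_{m,n_m}` with `m = p + d·ℓ + i` -/
  cond4 : ∀ (d : ℕ) (i : Fin ell),
    J3 (O3 i) ⊆ blk (p + d * ell + (i : ℕ)) (len (p + d * ell + (i : ℕ)) - 1)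
  /-- condition (5): `J₁ ∪ J₄ ⊆ σ_{i,j}` for all suffix blocks `i > p` -/
  cond5 : ∀ i j, p ≤ i → j < len i → J1 ∪ J4 ⊆ blk i j

/-- Cumulative block length: the position in the flattened word at which block `i` starts. -/
def Descendant.cum {N : ℕ} (D : Descendant N) (i : ℕ) : ℕ :=
  ∑ t ∈ Finset.range i, D.len t

/-- `σ : ℕ → 2^{Π_aug}` is the flattened word of the descendant `D`, obtained by
concatenating the blocks in order. -/
def IsFlattenedWord {N : ℕ} (D : Descendant N) (σ : ℕ → Set (Literal N)) : Prop :=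
  ∀ i j, j < D.len i → σ (D.cum i + j) = D.blk i j


lemma Descendant.self_le_cum {N : ℕ} (D : Descendant N) (i : ℕ) : i ≤ D.cum i := by
  calc i = ∑ _t ∈ Finset.range i, 1 := by simp
  _ ≤ _ := Finset.sum_le_sum (fun t _ => D.hlen t)

lemma Descendant.cum_mono {N : ℕ} (D : Descendant N) {a b : ℕ} (h : a ≤ b) :
    D.cum a ≤ D.cum b :=
  Finset.sum_le_sum_of_subset (Finset.range_subset_range.mpr h)

lemma Descendant.cum_succ {N : ℕ} (D : Descendant N) (i : ℕ) :
    D.cum (i + 1) = D.cum i + D.len i := by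
  simp [Descendant.cum, Finset.sum_range_succ]

lemma Descendant.exists_block {N : ℕ} (D : Descendant N) (n : ℕ) :
    ∃ i j, j < D.len i ∧ D.cum i ≤ n ∧ n = D.cum i + j := by
  have hP : ∃ i, n < D.cum (i + 1) :=
    ⟨n, lt_of_lt_of_le (Nat.lt_succ_self n) (D.self_le_cum _)⟩
  set i := Nat.find hP with hi
  have h1 : n < D.cum (i + 1) := Nat.find_spec hP
  have h2 : D.cum i ≤ n := by
    rcases Nat.eq_zero_or_pos i with h | h
    · simp [h, Descendant.cum]
    · have h3 := Nat.find_min hP (Nat.sub_lt h one_pos)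
      push_neg at h3
      have h4 : Nat.find hP - 1 + 1 = i := by omega
      rwa [h4] at h3
  rw [D.cum_succ] at h1
  exact ⟨i, n - D.cum i, by omega, h2, by omega⟩

lemma Descendant.lastOfBlock {N : ℕ} (D : Descendant N) (σ : ℕ → Set (Literal N))
    (hσ : IsFlattenedWord D σ) (i : ℕ) :
    σ (D.cum i + (D.len i - 1)) = D.blk i (D.len i - 1) :=
  hσ i _ (by have := D.hlen i; omega)

/-- Proposition 3: every descendant satisfies its specification. The flattened word `σ`
of a descendant satisfies `□J₁`, `◇J₂ʲ` for every `j`, `□◇J₃ʲ` for every `j`, and `◇□J₄`. -/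
theorem descendant_satisfies_spec {N : ℕ} (D : Descendant N)
    (σ : ℕ → Set (Literal N)) (hσ : IsFlattenedWord D σ) :
    (∀ n : ℕ, D.J1 ⊆ σ n)
    ∧ (∀ j : Fin D.k, ∃ n : ℕ, D.J2 j ⊆ σ n)
    ∧ (∀ j : Fin D.ell, ∀ N' : ℕ, ∃ n ≥ N', D.J3 j ⊆ σ n)
    ∧ (∃ N' : ℕ, ∀ n ≥ N', D.J4 ⊆ σ n):= by
  have hblk : ∀ n, ∃ i j, j < D.len i ∧ D.cum i ≤ n ∧ n = D.cum i + j := D.exists_block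
  refine ⟨?_, ?_, ?_, ?_⟩
  · intro n
    obtain ⟨i, j, hj, _, rfl⟩ := hblk n
    rw [hσ i j hj]
    rcases lt_or_ge i D.p with h | h
    · exact D.cond1 i j h hj
    · exact Set.Subset.trans Set.subset_union_left (D.cond5 i j h hj)
  · intro j
    refine ⟨D.cum (D.O2.symm j : ℕ) + (D.len (D.O2.symm j : ℕ) - 1), ?_⟩
    rw [D.lastOfBlock σ hσ]
    have := D.cond2 (D.O2.symm j)
    rwa [Equiv.apply_symm_apply] at this
  · intro j N'
    set i := D.O3.symm j
    set m := D.p + N' * D.ell + (i : ℕ) with hm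
    refine ⟨D.cum m + (D.len m - 1), ?_, ?_⟩
    · have h1 : N' ≤ m := by
        have : N' * 1 ≤ N' * D.ell := Nat.mul_le_mul_left _ D.hell
        omega
      exact le_trans (le_trans h1 (D.self_le_cum m)) (Nat.le_add_right _ _)
    · rw [D.lastOfBlock σ hσ]
      have := D.cond4 N' i
      rwa [Equiv.apply_symm_apply] at this
  · refine ⟨D.cum D.p, fun n hn => ?_⟩
    obtain ⟨i, j, hj, hle, rfl⟩ := hblk n
    rw [hσ i j hj]
    have hpi : D.p ≤ i := by
      by_contra h
      push_neg at h
      have : D.cum (i + 1) ≤ D.cum D.p := D.cum_mono h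
      rw [D.cum_succ] at this
      omega
    exact Set.Subset.trans Set.subset_union_right (D.cond5 i j hpi hj)
end
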